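/- arXiv:math/0401017 — 3 statements merged into one kernel-verified Lean document; each statement's English description precedes it below -/
import Mathlib

section
/- Let p : Ω → Λ be a covering of k-graphs, let (𝒢(Λ), i) be a fundamental groupoid of Λ, and let 𝒢(Λ) act on Ω⁰ by the corresponding action. Then the k-graph Ω is connected if and only if the action of 𝒢(Λ) on Ω⁰ is transitive. -/
/-!
Arrows-only formalization of `k`-graphs (higher-rank graphs), their coverings,
fundamental groupoids, and groupoid actions, following Pask–Quigg–Raeburn,
"Coverings of k-graphs".

A small category is encoded by its set of arrows `A` together with
source/range maps `src rng : A → A` (whose common image is the set of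
identities = vertices) and a (guarded) total composition `comp : A → A → A`,
where `comp f g` is the composite "f after g", meaningful when `src f = rng g`.
A `k`-graph additionally has a degree map `deg : A → (Fin k → ℕ)` which is
functorial and satisfies the unique factorization property.
-/

namespace KGraphCovering

/-- A `k`-graph in arrows-only form. -/
structure KGraphStruct (k : ℕ) (A : Type) : Type where
  src : A → A
  rng : A → A
  comp : A → A → A
  deg : A → (Fin k → ℕ)
  src_src : ∀ f, src (src f) = src f
  rng_src : ∀ f, rng (src f) = src f
  src_rng : ∀ f, src (rng f) = rng f
  rng_rng : ∀ f, rng (rng f) = rng f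
  comp_src_id : ∀ f, comp f (src f) = f
  rng_comp_id : ∀ f, comp (rng f) f = f
  src_comp : ∀ f g, src f = rng g → src (comp f g) = src g
  rng_comp : ∀ f g, src f = rng g → rng (comp f g) = rng f
  assoc : ∀ f g h, src f = rng g → src g = rng h →
    comp (comp f g) h = comp f (comp g h)
  deg_comp : ∀ f g, src f = rng g → deg (comp f g) = deg f + deg g
  deg_src : ∀ f, deg (src f) = 0
  factor : ∀ f m n, deg f = m + n →
    ∃! q : A × A, src q.1 = rng q.2 ∧ deg q.1 = m ∧ deg q.2 = n ∧ comp q.1 q.2 = f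

namespace KGraphStruct

variable {k : ℕ} {A : Type}

/-- The vertices (objects) are the identity arrows. -/
def IsVertex (S : KGraphStruct k A) (v : A) : Prop := S.src v = v

/-- A `k`-graph is connected if the equivalence relation generated by
"there is a morphism from `v` to `u`" relates all pairs of vertices. -/
def Connected (S : KGraphStruct k A) : Prop :=
  ∀ u v, S.IsVertex u → S.IsVertex v →
    Relation.EqvGen (fun a b => ∃ f, S.rng f = a ∧ S.src f = b) u v

end KGraphStruct

/-- A groupoid in arrows-only form. -/
structure GroupoidStruct (B : Type) : Type where
  src : B → B
  rng : B → B
  comp : B → B → B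
  inv : B → B
  src_src : ∀ f, src (src f) = src f
  rng_src : ∀ f, rng (src f) = src f
  src_rng : ∀ f, src (rng f) = rng f
  rng_rng : ∀ f, rng (rng f) = rng f
  comp_src_id : ∀ f, comp f (src f) = f
  rng_comp_id : ∀ f, comp (rng f) f = f
  src_comp : ∀ f g, src f = rng g → src (comp f g) = src g
  rng_comp : ∀ f g, src f = rng g → rng (comp f g) = rng f
  assoc : ∀ f g h, src f = rng g → src g = rng h →
    comp (comp f g) h = comp f (comp g h)
  src_inv : ∀ f, src (inv f) = rng f
  rng_inv : ∀ f, rng (inv f) = src f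
  inv_comp_self : ∀ f, comp (inv f) f = src f
  comp_inv_self : ∀ f, comp f (inv f) = rng f

namespace GroupoidStruct

variable {B : Type}

/-- The vertices (objects) of a groupoid are the identity arrows. -/
def IsVertex (G : GroupoidStruct B) (v : B) : Prop := G.src v = v

/-- A subgroup of the isotropy group `x𝒢x`, as a set of arrows. -/
def IsSubgroupAt (G : GroupoidStruct B) (x : B) (H : Set B) : Prop :=
  (∀ a ∈ H, G.src a = x ∧ G.rng a = x) ∧ x ∈ H ∧
  (∀ a ∈ H, ∀ b ∈ H, G.comp a b ∈ H) ∧ (∀ a ∈ H, G.inv a ∈ H)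

/-- `K` is a conjugate of `H` in the isotropy group at `x`. -/
def ConjAt (G : GroupoidStruct B) (x : B) (H K : Set B) : Prop :=
  ∃ g, G.src g = x ∧ G.rng g = x ∧
    K = (fun a => G.comp (G.comp g a) (G.inv g)) '' H

/-- `H` is a normal subset of the isotropy group at `x`. -/
def IsNormalAt (G : GroupoidStruct B) (x : B) (H : Set B) : Prop :=
  ∀ g, G.src g = x → G.rng g = x → ∀ a ∈ H, G.comp (G.comp g a) (G.inv g) ∈ H

/-- The normalizer of `H` in the isotropy group at `x`. -/
def normalizerAt (G : GroupoidStruct B) (x : B) (H : Set B) : Set B :=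
  {g | G.src g = x ∧ G.rng g = x ∧
    (fun a => G.comp (G.comp g a) (G.inv g)) '' H = H}

end GroupoidStruct

/-- `f` is a morphism of `k`-graphs (a degree-preserving functor). -/
def IsKGraphHomFun {k : ℕ} {A A' : Type} (S : KGraphStruct k A)
    (T : KGraphStruct k A') (f : A → A') : Prop :=
  (∀ a, f (S.src a) = T.src (f a)) ∧
  (∀ a, f (S.rng a) = T.rng (f a)) ∧
  (∀ a b, S.src a = S.rng b → f (S.comp a b) = T.comp (f a) (f b)) ∧
  (∀ a, T.deg (f a) = S.deg a)

/-- `f` is a functor from a `k`-graph to a groupoid. -/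
def IsFunctorToGpdFun {k : ℕ} {A B : Type} (S : KGraphStruct k A)
    (G : GroupoidStruct B) (f : A → B) : Prop :=
  (∀ a, f (S.src a) = G.src (f a)) ∧
  (∀ a, f (S.rng a) = G.rng (f a)) ∧
  (∀ a b, S.src a = S.rng b → f (S.comp a b) = G.comp (f a) (f b))

/-- `f` is a morphism of groupoids (a functor). -/
def IsGpdHomFun {B C : Type} (G : GroupoidStruct B) (H : GroupoidStruct C)
    (f : B → C) : Prop :=
  (∀ a, f (G.src a) = H.src (f a)) ∧
  (∀ a, f (G.rng a) = H.rng (f a)) ∧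
  (∀ a b, G.src a = G.rng b → f (G.comp a b) = H.comp (f a) (f b))

/-- `p : Ω → Λ` is a covering of `k`-graphs: a surjective `k`-graph morphism
which maps `Ωv` bijectively onto `Λp(v)` and `vΩ` bijectively onto `p(v)Λ`
for every vertex `v` of `Ω`. -/
structure IsCovering {k : ℕ} {A A' : Type} (S : KGraphStruct k A')
    (T : KGraphStruct k A) (p : A' → A) : Prop where
  hom : IsKGraphHomFun S T p
  surj : Function.Surjective p
  src_inj : ∀ a b, S.src a = S.src b → p a = p b → a = b
  src_lift : ∀ v, S.IsVertex v → ∀ g, T.src g = p v → ∃ a, S.src a = v ∧ p a = g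
  rng_inj : ∀ a b, S.rng a = S.rng b → p a = p b → a = b
  rng_lift : ∀ v, S.IsVertex v → ∀ g, T.rng g = p v → ∃ a, S.rng a = v ∧ p a = g

/-- A fundamental groupoid of a `k`-graph `S`: a groupoid `G` whose object
set is identified with the vertex set of `S` via the canonical functor `i`
(which is bijective on objects), with the universal property that every
functor from `S` to a groupoid factors uniquely through `i`. -/
structure FundamentalGroupoid {k : ℕ} {A : Type} (S : KGraphStruct k A) :
    Type 1 where
  B : Type
  G : GroupoidStruct B
  i : A → B
  i_hom : IsFunctorToGpdFun S G i
  obj_bij : ∀ w, G.IsVertex w → ∃! v, S.IsVertex v ∧ i v = w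
  univ : ∀ {C : Type} (H : GroupoidStruct C) (F : A → C),
    IsFunctorToGpdFun S H F →
    ∃! F' : B → C, IsGpdHomFun G H F' ∧ ∀ a, F' (i a) = F a

/-- The fundamental group `π(Λ,x)` at a vertex `x`, as the isotropy of the
fundamental groupoid at `i x`. -/
def FundamentalGroupoid.pi1 {k : ℕ} {A : Type} {S : KGraphStruct k A}
    (F : FundamentalGroupoid S) (x : A) : Set F.B :=
  {a | F.G.src a = F.i x ∧ F.G.rng a = F.i x}

/-- An automorphism of the covering `p : Ω → Λ`. -/
def IsCoveringAut {k : ℕ} {A A' : Type} (Ω : KGraphStruct k A')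
    (Λ : KGraphStruct k A) (p : A' → A) (φ : A' → A') : Prop :=
  Function.Bijective φ ∧ IsKGraphHomFun Ω Ω φ ∧ ∀ a, p (φ a) = p a

/-- The action of the fundamental groupoid `F = 𝒢(Λ)` on the vertex set of a
covering `p : Ω → Λ`, determined by `i(p(λ)) ⬝ s(λ) = r(λ)`.  The fiber of a
vertex `w` of `Ω` is over the object `F.i (p w)`. -/
structure CorrespondingAction {k : ℕ} {A A' : Type} (Ω : KGraphStruct k A')
    (Λ : KGraphStruct k A) (F : FundamentalGroupoid Λ) (p : A' → A)
    (act : F.B → A' → A') : Prop where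
  act_vertex : ∀ a w, Ω.IsVertex w → F.G.src a = F.i (p w) →
    Ω.IsVertex (act a w) ∧ F.i (p (act a w)) = F.G.rng a
  act_id : ∀ w, Ω.IsVertex w → act (F.i (p w)) w = w
  act_comp : ∀ a b w, Ω.IsVertex w → F.G.src b = F.i (p w) →
    F.G.src a = F.G.rng b → act (F.G.comp a b) w = act a (act b w)
  act_cov : ∀ lam, act (F.i (p lam)) (Ω.src lam) = Ω.rng lam

/-- An action of a groupoid `G` on a set `V`, presented by an anchor map
`fib : V → B` (landing in vertices) and a guarded action map. -/
structure GpdActionStruct {B : Type} (G : GroupoidStruct B) (V : Type) :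
    Type where
  fib : V → B
  act : B → V → V
  fib_vertex : ∀ v, G.src (fib v) = fib v
  act_fib : ∀ a v, G.src a = fib v → fib (act a v) = G.rng a
  act_id : ∀ v, act (fib v) v = v
  act_comp : ∀ a b v, G.src b = fib v → G.src a = G.rng b →
    act (G.comp a b) v = act a (act b v)

namespace GpdActionStruct

variable {B V W : Type} {G : GroupoidStruct B}

/-- Transitivity of a groupoid action. -/
def Transitive (ρ : GpdActionStruct G V) : Prop :=
  ∀ u v : V, ∃ a, G.src a = ρ.fib v ∧ ρ.act a v = u

/-- The stability group of the action at `v`. -/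
def stab (ρ : GpdActionStruct G V) (v : V) : Set B :=
  {a | G.src a = ρ.fib v ∧ G.rng a = ρ.fib v ∧ ρ.act a v = v}

/-- Freeness of a groupoid action: all stability groups are trivial. -/
def Free (ρ : GpdActionStruct G V) : Prop :=
  ∀ (v : V) (a : B), a ∈ ρ.stab v → a = ρ.fib v

end GpdActionStruct

/-- A morphism of actions of the groupoid `G`: a fiber-preserving
equivariant map. -/
def IsActionHom {B V W : Type} {G : GroupoidStruct B}
    (ρ : GpdActionStruct G V) (σ : GpdActionStruct G W) (φ : V → W) : Prop :=
  (∀ v, σ.fib (φ v) = ρ.fib v) ∧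
  ∀ a v, G.src a = ρ.fib v → φ (ρ.act a v) = σ.act a (φ v)

/-- An automorphism of an action of the groupoid `G`. -/
def IsActionAut {B V : Type} {G : GroupoidStruct B}
    (ρ : GpdActionStruct G V) (φ : V → V) : Prop :=
  Function.Bijective φ ∧ IsActionHom ρ ρ φ

/-- A universal covering: a connected covering admitting a morphism of
coverings to every connected covering of the base. -/
def IsUniversalCovering {k : ℕ} {A A' : Type} (Ω : KGraphStruct k A')
    (Λ : KGraphStruct k A) (p : A' → A) : Prop :=
  IsCovering Ω Λ p ∧ Ω.Connected ∧
  ∀ (A'' : Type) (Sg : KGraphStruct k A'') (q : A'' → A),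
    IsCovering Sg Λ q → Sg.Connected →
    ∃ φ : A' → A'', IsKGraphHomFun Ω Sg φ ∧ ∀ a, q (φ a) = p a

end KGraphCovering

/-!
An arrow `λ` of `Ω` joins `s(λ)` to `r(λ) = i(p(λ)) s(λ)`, so each component of `Ω` lies in an
orbit. Conversely, by the universal property `𝒢(Λ)` is generated by the arrows `i(α)`: the
subgroupoid they generate receives a functor from `Λ`, and its inclusion composed with the
induced functor is the identity by uniqueness. Each `i(α)` moves a vertex `s(λ)` of `Ω` to
`r(λ)`, where `λ` is the lift of `α` at that vertex, so every orbit lies in a component.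
-/

namespace KGraphCovering

section Groupoid

variable {B C D : Type}

lemma GroupoidStruct.isGpdHomFun_id (G : GroupoidStruct B) : IsGpdHomFun G G id :=
  ⟨fun _ => rfl, fun _ => rfl, fun _ _ _ => rfl⟩

lemma IsGpdHomFun.comp {G : GroupoidStruct B} {H : GroupoidStruct C} {K : GroupoidStruct D}
    {g : C → D} {f : B → C} (hg : IsGpdHomFun H K g) (hf : IsGpdHomFun G H f) :
    IsGpdHomFun G K (g ∘ f) := by
  refine ⟨fun a => by simp only [Function.comp, hf.1, hg.1],
    fun a => by simp only [Function.comp, hf.2.1, hg.2.1], fun a b hab => ?_⟩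
  have hab' : H.src (f a) = H.rng (f b) := by rw [← hf.1, ← hf.2.1, hab]
  simp only [Function.comp, hf.2.2 a b hab, hg.2.2 _ _ hab']

namespace GroupoidStruct

variable (G : GroupoidStruct B) {P : B → Prop} (hinv : ∀ b, P b → P (G.inv b))
  (hcomp : ∀ a b, G.src a = G.rng b → P a → P b → P (G.comp a b))

include hinv hcomp in
lemma src_mem_of_closed {b : B} (hb : P b) : P (G.src b) :=
  G.inv_comp_self b ▸ hcomp _ _ (G.src_inv b) (hinv b hb) hb

include hinv hcomp in
lemma rng_mem_of_closed {b : B} (hb : P b) : P (G.rng b) :=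
  G.comp_inv_self b ▸ hcomp _ _ (G.rng_inv b).symm hb (hinv b hb)

open Classical in
/-- Non-composable pairs are sent to their first entry. -/
noncomputable def subgroupoid : GroupoidStruct {b // P b} where
  src b := ⟨G.src b, G.src_mem_of_closed hinv hcomp b.2⟩
  rng b := ⟨G.rng b, G.rng_mem_of_closed hinv hcomp b.2⟩
  comp a b := if h : G.src a = G.rng b then ⟨G.comp a b, hcomp _ _ h a.2 b.2⟩ else a
  inv b := ⟨G.inv b, hinv _ b.2⟩
  src_src f := Subtype.ext (G.src_src f)
  rng_src f := Subtype.ext (G.rng_src f)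
  src_rng f := Subtype.ext (G.src_rng f)
  rng_rng f := Subtype.ext (G.rng_rng f)
  comp_src_id f := by
    rw [dif_pos (G.rng_src f).symm]; exact Subtype.ext (G.comp_src_id f)
  rng_comp_id f := by
    rw [dif_pos (G.src_rng f)]; exact Subtype.ext (G.rng_comp_id f)
  src_comp f g h := by
    have h' := congrArg Subtype.val h
    rw [dif_pos h']; exact Subtype.ext (G.src_comp f g h')
  rng_comp f g h := by
    have h' := congrArg Subtype.val h
    rw [dif_pos h']; exact Subtype.ext (G.rng_comp f g h')
  assoc f g h hfg hgh := by
    have h₁ := congrArg Subtype.val hfg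
    have h₂ := congrArg Subtype.val hgh
    rw [dif_pos h₁, dif_pos h₂, dif_pos ((G.src_comp f g h₁).trans h₂),
      dif_pos (h₁.trans (G.rng_comp g h h₂).symm)]
    exact Subtype.ext (G.assoc f g h h₁ h₂)
  src_inv f := Subtype.ext (G.src_inv f)
  rng_inv f := Subtype.ext (G.rng_inv f)
  inv_comp_self f := by
    rw [dif_pos (G.src_inv f)]; exact Subtype.ext (G.inv_comp_self f)
  comp_inv_self f := by
    rw [dif_pos (G.rng_inv f).symm]; exact Subtype.ext (G.comp_inv_self f)

lemma subgroupoid_comp_val {a b : {b // P b}} (h : G.src a = G.rng b) :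
    ((G.subgroupoid hinv hcomp).comp a b).1 = G.comp a b := by
  simp only [subgroupoid, dif_pos h]

lemma isGpdHomFun_subgroupoid_val :
    IsGpdHomFun (G.subgroupoid hinv hcomp) G Subtype.val :=
  ⟨fun _ => rfl, fun _ => rfl,
    fun _ _ h => G.subgroupoid_comp_val hinv hcomp (congrArg Subtype.val h)⟩

end GroupoidStruct

end Groupoid

theorem FundamentalGroupoid.arrow_induction {k : ℕ} {A : Type} {S : KGraphStruct k A}
    (F : FundamentalGroupoid S) {P : F.B → Prop} (base : ∀ a, P (F.i a))
    (inv : ∀ b, P b → P (F.G.inv b))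
    (comp : ∀ a b, F.G.src a = F.G.rng b → P a → P b → P (F.G.comp a b)) (b : F.B) : P b := by
  let H := F.G.subgroupoid inv comp
  have hi : IsFunctorToGpdFun S H fun a => ⟨F.i a, base a⟩ := by
    refine ⟨fun a => Subtype.ext (F.i_hom.1 a), fun a => Subtype.ext (F.i_hom.2.1 a),
      fun a a' h => Subtype.ext ?_⟩
    have h' : F.G.src (F.i a) = F.G.rng (F.i a') := by rw [← F.i_hom.1, ← F.i_hom.2.1, h]
    rw [F.G.subgroupoid_comp_val inv comp h']
    exact F.i_hom.2.2 a a' h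
  obtain ⟨j, ⟨hj, hji⟩, -⟩ := F.univ H _ hi
  obtain ⟨_, -, huniq⟩ := F.univ F.G F.i F.i_hom
  have hval : Subtype.val ∘ j = id :=
    (huniq _ ⟨(F.G.isGpdHomFun_subgroupoid_val inv comp).comp hj,
      fun a => congrArg Subtype.val (hji a)⟩).trans
    (huniq id ⟨F.G.isGpdHomFun_id, fun _ => rfl⟩).symm
  have hjb : (j b).1 = b := congrFun hval b
  exact hjb ▸ (j b).2

lemma FundamentalGroupoid.src_i_of_isVertex {k : ℕ} {A : Type} {S : KGraphStruct k A}
    (F : FundamentalGroupoid S) {x : A} (hx : S.IsVertex x) : F.G.src (F.i x) = F.i x := by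
  rw [← F.i_hom.1, hx]

lemma FundamentalGroupoid.i_injOn_vertices {k : ℕ} {A : Type} {S : KGraphStruct k A}
    (F : FundamentalGroupoid S) {x y : A} (hx : S.IsVertex x) (hy : S.IsVertex y)
    (h : F.i x = F.i y) : x = y := by
  obtain ⟨_, -, huniq⟩ := F.obj_bij (F.i x) (F.src_i_of_isVertex hx)
  exact (huniq x ⟨hx, rfl⟩).trans (huniq y ⟨hy, h.symm⟩).symm

lemma IsKGraphHomFun.isVertex {k : ℕ} {A A' : Type} {S : KGraphStruct k A}
    {T : KGraphStruct k A'} {f : A → A'} (hf : IsKGraphHomFun S T f) {v : A}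
    (hv : S.IsVertex v) : T.IsVertex (f v) := by
  rw [KGraphStruct.IsVertex, ← hf.1, hv]

def KGraphStruct.Adj {k : ℕ} {A : Type} (S : KGraphStruct k A) (u v : A) : Prop :=
  ∃ f, S.rng f = u ∧ S.src f = v

section Covering

variable {k : ℕ} {A A' : Type} {Λ : KGraphStruct k A} {Ω : KGraphStruct k A'}
  {FΛ : FundamentalGroupoid Λ} {p : A' → A} {act : FΛ.B → A' → A'}

variable (FΛ p act) in
def InOrbit (w v : A') : Prop :=
  ∃ a, FΛ.G.src a = FΛ.i (p v) ∧ act a v = w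

lemma act_inv_act (hact : CorrespondingAction Ω Λ FΛ p act) {a : FΛ.B} {v : A'}
    (hv : Ω.IsVertex v) (ha : FΛ.G.src a = FΛ.i (p v)) : act (FΛ.G.inv a) (act a v) = v := by
  rw [← hact.act_comp _ a v hv ha (FΛ.G.src_inv a), FΛ.G.inv_comp_self, ha, hact.act_id v hv]

lemma act_act_inv (hact : CorrespondingAction Ω Λ FΛ p act) {a : FΛ.B} {v : A'}
    (hv : Ω.IsVertex v) (ha : FΛ.G.rng a = FΛ.i (p v)) : act a (act (FΛ.G.inv a) v) = v := by
  rw [← hact.act_comp a _ v hv (by rw [FΛ.G.src_inv, ha]) (FΛ.G.rng_inv a).symm,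
    FΛ.G.comp_inv_self, ha, hact.act_id v hv]

lemma inOrbit_refl (hp : IsCovering Ω Λ p) (hact : CorrespondingAction Ω Λ FΛ p act)
    {v : A'} (hv : Ω.IsVertex v) : InOrbit FΛ p act v v :=
  ⟨_, FΛ.src_i_of_isVertex (hp.hom.isVertex hv), hact.act_id v hv⟩

lemma InOrbit.symm (hact : CorrespondingAction Ω Λ FΛ p act) {v w : A'} (hv : Ω.IsVertex v)
    (h : InOrbit FΛ p act w v) : InOrbit FΛ p act v w := by
  obtain ⟨a, ha, rfl⟩ := h
  exact ⟨_, by rw [FΛ.G.src_inv, (hact.act_vertex a v hv ha).2], act_inv_act hact hv ha⟩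

lemma InOrbit.trans (hact : CorrespondingAction Ω Λ FΛ p act) {u v w : A'}
    (hv : Ω.IsVertex v) (huw : InOrbit FΛ p act u w) (hwv : InOrbit FΛ p act w v) :
    InOrbit FΛ p act u v := by
  obtain ⟨b, hb, rfl⟩ := hwv
  obtain ⟨a, ha, rfl⟩ := huw
  have hab : FΛ.G.src a = FΛ.G.rng b := ha.trans (hact.act_vertex b v hv hb).2
  exact ⟨_, (FΛ.G.src_comp a b hab).trans hb, hact.act_comp a b v hv hb hab⟩

lemma inOrbit_of_adj (hp : IsCovering Ω Λ p) (hact : CorrespondingAction Ω Λ FΛ p act)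
    {u v : A'} (h : Ω.Adj u v) : InOrbit FΛ p act u v := by
  obtain ⟨f, rfl, rfl⟩ := h
  exact ⟨_, by rw [← FΛ.i_hom.1, ← hp.hom.1], hact.act_cov f⟩

lemma inOrbit_of_eqvGen (hp : IsCovering Ω Λ p) (hact : CorrespondingAction Ω Λ FΛ p act)
    {u v : A'} (hv : Ω.IsVertex v) (h : Relation.EqvGen Ω.Adj u v) : InOrbit FΛ p act u v := by
  rw [← Relation.EqvGen.reflTransGen_symmGen] at h
  induction h using Relation.ReflTransGen.head_induction_on with
  | refl => exact inOrbit_refl hp hact hv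
  | @head u x hux _ hxv =>
    rcases hux with hux | hxu
    · exact (inOrbit_of_adj hp hact hux).trans hact hv hxv
    · have hu : Ω.IsVertex u := by obtain ⟨f, -, rfl⟩ := hxu; exact Ω.src_src f
      exact ((inOrbit_of_adj hp hact hxu).symm hact hu).trans hact hv hxv

lemma eqvGen_act (hp : IsCovering Ω Λ p) (hact : CorrespondingAction Ω Λ FΛ p act)
    (b : FΛ.B) : ∀ v, Ω.IsVertex v → FΛ.G.src b = FΛ.i (p v) →
      Relation.EqvGen Ω.Adj (act b v) v := by
  induction b using FΛ.arrow_induction with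
  | base α =>
    intro v hv h
    have hα : Λ.src α = p v := FΛ.i_injOn_vertices (Λ.src_src α) (hp.hom.isVertex hv)
      ((FΛ.i_hom.1 α).trans h)
    obtain ⟨lam, rfl, rfl⟩ := hp.src_lift v hv α hα
    rw [hact.act_cov lam]
    exact .rel _ _ ⟨lam, rfl, rfl⟩
  | inv b ih =>
    intro v hv h
    rw [FΛ.G.src_inv] at h
    obtain ⟨hw, hwb⟩ := hact.act_vertex _ v hv (by rw [FΛ.G.src_inv, h])
    have hlinked := ih _ hw (by rw [hwb, FΛ.G.rng_inv])
    rw [act_act_inv hact hv h] at hlinked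
    exact hlinked.symm
  | comp a b hab iha ihb =>
    intro v hv h
    rw [FΛ.G.src_comp a b hab] at h
    obtain ⟨hw, hwb⟩ := hact.act_vertex b v hv h
    rw [hact.act_comp a b v hv h hab]
    exact (iha _ hw (hab.trans hwb.symm)).trans _ _ _ (ihb v hv h)

end Covering

/-- A covering `p : Ω → Λ` has connected total space `Ω` if
and only if the corresponding action of `𝒢(Λ)` on the vertex set `Ω⁰` is
transitive. -/
theorem connected_iff_transitive {k : ℕ} {A A' : Type}
    (Λ : KGraphStruct k A) (Ω : KGraphStruct k A')
    (FΛ : FundamentalGroupoid Λ)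
    (p : A' → A) (hp : IsCovering Ω Λ p)
    (act : FΛ.B → A' → A') (hact : CorrespondingAction Ω Λ FΛ p act) :
    Ω.Connected ↔
      ∀ w w', Ω.IsVertex w → Ω.IsVertex w' →
        ∃ a, FΛ.G.src a = FΛ.i (p w') ∧ act a w' = w := by
  constructor
  · intro hconn w w' hw hw'
    exact inOrbit_of_eqvGen hp hact hw' (hconn w w' hw hw')
  · intro htrans w w' hw hw'
    obtain ⟨a, ha, rfl⟩ := htrans w w' hw hw'
    exact eqvGen_act hp hact a w' hw' ha

end KGraphCovering
end

section
/- Let 𝒢 be a groupoid acting transitively on a set V, x an object of 𝒢, and v ∈ V_x. Then the automorphism group Aut(V,𝒢) of the action is isomorphic, as a group, to N(S_v)/S_v, where N(S_v) is the normalizer of the stability group S_v in the isotropy group x𝒢x; explicitly, each c ∈ N(S_v) determines a well-defined automorphism av ↦ acv (a ∈ 𝒢x), this assignment is surjective onto Aut(V,𝒢), and its kernel-type relation identifies c, c' exactly when c⁻¹c' ∈ S_v. -/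
/-!
For `c ∈ x𝒢x` the stability groups satisfy `S_{cv} = c S_v c⁻¹`, so `c` normalizes `S_v`
exactly when `S_{cv} = S_v`. Since `av = a'v` iff `a'⁻¹a ∈ S_v`, the map `av ↦ aw` is well
defined and an automorphism as soon as `S_w = S_v`; conversely an automorphism `φ` preserves
stability groups and is the map `av ↦ a(φ v)`. Taking `w = cv` (transitivity provides `c` with
`cv = φ v`) gives the correspondence, and `cv = c'v` iff `c⁻¹c' ∈ S_v` identifies its fibres.
-/

namespace KGraphCovering

namespace GroupoidStruct

variable {B : Type} (G : GroupoidStruct B)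

theorem inv_inv (f : B) : G.inv (G.inv f) = f :=
  calc G.inv (G.inv f)
      = G.comp (G.inv (G.inv f)) (G.comp (G.inv f) f) := by
        rw [G.inv_comp_self, ← G.rng_inv, ← G.src_inv, G.comp_src_id]
    _ = G.comp (G.src (G.inv f)) f := by
        rw [← G.assoc _ _ _ (G.src_inv _) (G.src_inv f), G.inv_comp_self]
    _ = f := by rw [G.src_inv, G.rng_comp_id]

theorem comp_inv_cancel_left {f g : B} (h : G.rng f = G.rng g) :
    G.comp f (G.comp (G.inv f) g) = g := by
  rw [← G.assoc _ _ _ (G.rng_inv f).symm (by rw [G.src_inv, h]), G.comp_inv_self, h,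
    G.rng_comp_id]

theorem comp_inv_cancel_right {f g : B} (h : G.src f = G.rng g) :
    G.comp (G.comp f g) (G.inv g) = f := by
  rw [G.assoc _ _ _ h (G.rng_inv g).symm, G.comp_inv_self, ← h, G.comp_src_id]

end GroupoidStruct

namespace GpdActionStruct

variable {B V : Type} {G : GroupoidStruct B} (ρ : GpdActionStruct G V)

theorem act_inv_act {a : B} {v : V} (ha : G.src a = ρ.fib v) :
    ρ.act (G.inv a) (ρ.act a v) = v := by
  rw [← ρ.act_comp _ _ v ha (G.src_inv a), G.inv_comp_self, ha, ρ.act_id]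

theorem act_eq_act_iff {a a' : B} {w : V} (ha : G.src a = ρ.fib w)
    (ha' : G.src a' = ρ.fib w) :
    ρ.act a w = ρ.act a' w ↔ G.rng a = G.rng a' ∧ G.comp (G.inv a') a ∈ ρ.stab w := by
  constructor
  · intro h
    have hrng : G.rng a = G.rng a' := by
      rw [← ρ.act_fib a w ha, ← ρ.act_fib a' w ha', h]
    have hcomp : G.src (G.inv a') = G.rng a := by rw [G.src_inv, hrng]
    refine ⟨hrng, ?_, ?_, ?_⟩
    · rw [G.src_comp _ _ hcomp, ha]
    · rw [G.rng_comp _ _ hcomp, G.rng_inv, ha']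
    · rw [ρ.act_comp _ _ w ha hcomp, h, ρ.act_inv_act ha']
  · rintro ⟨hrng, hsrc, -, hact⟩
    have hcomp : G.src (G.inv a') = G.rng a := by rw [G.src_inv, hrng]
    rw [← G.comp_inv_cancel_left hrng.symm, ρ.act_comp _ _ w hsrc
      (by rw [G.rng_comp _ _ hcomp, G.rng_inv]), hact]

theorem conj_mem_stab_act {c s : B} {v : V} (hc : G.src c = ρ.fib v) (hs : s ∈ ρ.stab v) :
    G.comp (G.comp c s) (G.inv c) ∈ ρ.stab (ρ.act c v) := by
  obtain ⟨hs₁, hs₂, hs₃⟩ := hs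
  have hcs : G.src c = G.rng s := hc.trans hs₂.symm
  have hcsc : G.src (G.comp c s) = G.rng (G.inv c) := by
    rw [G.src_comp _ _ hcs, G.rng_inv, hs₁, hc]
  have hfib : ρ.fib (ρ.act c v) = G.rng c := ρ.act_fib c v hc
  refine ⟨?_, ?_, ?_⟩
  · rw [G.src_comp _ _ hcsc, G.src_inv, hfib]
  · rw [G.rng_comp _ _ hcsc, G.rng_comp _ _ hcs, hfib]
  · rw [ρ.act_comp _ _ _ (by rw [G.src_inv, hfib]) hcsc, ρ.act_inv_act hc,
      ρ.act_comp _ _ _ (by rw [hs₁]) hcs, hs₃]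

theorem stab_act {c : B} {v : V} (hc : G.src c = ρ.fib v) :
    ρ.stab (ρ.act c v) = (fun s => G.comp (G.comp c s) (G.inv c)) '' ρ.stab v := by
  apply Set.Subset.antisymm
  · intro t ht
    have hinv : G.src (G.inv c) = ρ.fib (ρ.act c v) := by rw [G.src_inv, ρ.act_fib c v hc]
    have hs := ρ.conj_mem_stab_act hinv ht
    rw [ρ.act_inv_act hc, G.inv_inv] at hs
    refine ⟨_, hs, ?_⟩
    obtain ⟨ht₁, ht₂, -⟩ := ht
    rw [ρ.act_fib c v hc] at ht₁ ht₂
    have hct : G.src (G.inv c) = G.rng t := by rw [G.src_inv, ht₂]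
    show G.comp (G.comp c (G.comp (G.comp (G.inv c) t) c)) (G.inv c) = t
    rw [← G.assoc _ _ _ (by rw [G.rng_comp _ _ hct, G.rng_inv])
        (by rw [G.src_comp _ _ hct, ht₁]),
      G.comp_inv_cancel_left ht₂.symm, G.comp_inv_cancel_right ht₁]
  · rintro _ ⟨s, hs, rfl⟩
    exact ρ.conj_mem_stab_act hc hs

theorem mem_normalizerAt_stab_iff {c : B} {v : V} :
    c ∈ G.normalizerAt (ρ.fib v) (ρ.stab v) ↔
      G.src c = ρ.fib v ∧ G.rng c = ρ.fib v ∧ ρ.stab (ρ.act c v) = ρ.stab v :=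
  and_congr_right fun hc => and_congr_right fun _ => by rw [ρ.stab_act hc, eq_comm]

theorem fib_eq_of_stab_eq {v w : V} (h : ρ.stab w = ρ.stab v) : ρ.fib w = ρ.fib v := by
  have hw : ρ.fib w ∈ ρ.stab w :=
    ⟨ρ.fib_vertex w, by rw [← ρ.fib_vertex w, G.rng_src], ρ.act_id w⟩
  rw [h] at hw
  rw [← hw.1, ρ.fib_vertex]

theorem stab_apply_of_isActionAut {φ : V → V} (hφ : IsActionAut ρ φ) (v : V) :
    ρ.stab (φ v) = ρ.stab v := by
  obtain ⟨hbij, hfib, hequiv⟩ := hφ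
  ext s
  simp only [stab, Set.mem_ofPred_eq, hfib]
  refine and_congr_right fun hs => and_congr_right fun _ => ?_
  rw [← hequiv s v hs, hbij.injective.eq_iff]

/-- The map `av ↦ aw`, which does not depend on the choice of `a` once `S_w = S_v`. -/
noncomputable def transport (hT : ρ.Transitive) (v w : V) (u : V) : V :=
  ρ.act (hT u v).choose w

variable (hT : ρ.Transitive)

theorem exists_transport_eq (v u : V) :
    ∃ a, G.src a = ρ.fib v ∧ ρ.act a v = u ∧ ∀ w, ρ.transport hT v w u = ρ.act a w :=
  ⟨_, (hT u v).choose_spec.1, (hT u v).choose_spec.2, fun _ => rfl⟩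

theorem transport_act {v w : V} (hstab : ρ.stab w = ρ.stab v) {a : B}
    (ha : G.src a = ρ.fib v) : ρ.transport hT v w (ρ.act a v) = ρ.act a w := by
  have hfib := ρ.fib_eq_of_stab_eq hstab
  obtain ⟨a₀, ha₀, hact, htr⟩ := ρ.exists_transport_eq hT v (ρ.act a v)
  rw [htr, ρ.act_eq_act_iff (ha₀.trans hfib.symm) (ha.trans hfib.symm), hstab,
    ← ρ.act_eq_act_iff ha₀ ha]
  exact hact

theorem transport_self {v w : V} (hstab : ρ.stab w = ρ.stab v) :
    ρ.transport hT v w v = w := by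
  have h := ρ.transport_act hT hstab (ρ.fib_vertex v)
  rwa [ρ.act_id, ← ρ.fib_eq_of_stab_eq hstab, ρ.act_id] at h

theorem transport_inj {v w w' : V} (hstab : ρ.stab w = ρ.stab v)
    (hstab' : ρ.stab w' = ρ.stab v) : ρ.transport hT v w = ρ.transport hT v w' ↔ w = w' :=
  ⟨fun h => by rw [← ρ.transport_self hT hstab, h, ρ.transport_self hT hstab'], congrArg _⟩

theorem isActionAut_transport {v w : V} (hstab : ρ.stab w = ρ.stab v) :
    IsActionAut ρ (ρ.transport hT v w) := by
  have hfib := ρ.fib_eq_of_stab_eq hstab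
  have hinv : ∀ {v w : V}, ρ.stab w = ρ.stab v →
      Function.LeftInverse (ρ.transport hT w v) (ρ.transport hT v w) :=
    fun {v w} hstab u => by
    obtain ⟨a, ha, rfl, htr⟩ := ρ.exists_transport_eq hT v u
    rw [htr, ρ.transport_act hT hstab.symm (ha.trans (ρ.fib_eq_of_stab_eq hstab).symm)]
  refine ⟨⟨(hinv hstab).injective, (hinv hstab.symm).surjective⟩, fun u => ?_, fun b u hb => ?_⟩
  all_goals obtain ⟨a, ha, rfl, htr⟩ := ρ.exists_transport_eq hT v u
  · rw [htr, ρ.act_fib _ _ (ha.trans hfib.symm), ρ.act_fib _ _ ha]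
  · have hba : G.src b = G.rng a := by rw [hb, ρ.act_fib _ _ ha]
    rw [← ρ.act_comp _ _ _ ha hba, ρ.transport_act hT hstab (by rw [G.src_comp _ _ hba, ha]),
      ρ.act_comp _ _ _ (ha.trans hfib.symm) hba, htr]

theorem transport_comp_transport {v w w' : V} (hstab : ρ.stab w = ρ.stab v)
    (hfib' : ρ.fib w' = ρ.fib v) :
    ρ.transport hT v w ∘ ρ.transport hT v w' = ρ.transport hT v (ρ.transport hT v w w') := by
  funext u
  obtain ⟨a, ha, rfl, htr⟩ := ρ.exists_transport_eq hT v u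
  obtain ⟨b, hb, rfl⟩ := hT w' v
  have hab : G.src a = G.rng b := by rw [ha, ← hfib', ρ.act_fib _ _ hb]
  rw [Function.comp_apply, htr, ← ρ.act_comp _ _ _ hb hab,
    ρ.transport_act hT hstab (by rw [G.src_comp _ _ hab, hb]),
    ρ.act_comp _ _ _ (hb.trans (ρ.fib_eq_of_stab_eq hstab).symm) hab, htr,
    ρ.transport_act hT hstab hb]

theorem transport_apply_self {φ : V → V} (hφ : IsActionHom ρ ρ φ) (v : V) :
    ρ.transport hT v (φ v) = φ := by
  funext u
  obtain ⟨a, ha, rfl, htr⟩ := ρ.exists_transport_eq hT v u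
  rw [htr, ← hφ.2 _ _ ha]

end GpdActionStruct

theorem aut_action_iso_normalizer_quotient_general {B V : Type}
    (G : GroupoidStruct B) (ρ : GpdActionStruct G V)
    (htrans : ρ.Transitive) (x : B)
    (v : V) (hv : ρ.fib v = x) :
    ∃ Θ : B → (V → V),
      (∀ c ∈ G.normalizerAt x (ρ.stab v),
        IsActionAut ρ (Θ c) ∧
        ∀ a, G.src a = x → Θ c (ρ.act a v) = ρ.act (G.comp a c) v) ∧
      (∀ φ, IsActionAut ρ φ → ∃ c ∈ G.normalizerAt x (ρ.stab v), Θ c = φ) ∧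
      (∀ c ∈ G.normalizerAt x (ρ.stab v), ∀ c' ∈ G.normalizerAt x (ρ.stab v),
        Θ c ∘ Θ c' = Θ (G.comp c' c)) ∧
      (∀ c ∈ G.normalizerAt x (ρ.stab v), ∀ c' ∈ G.normalizerAt x (ρ.stab v),
        (Θ c = Θ c' ↔ G.comp (G.inv c) c' ∈ ρ.stab v)) := by
  subst hv
  refine ⟨fun c => ρ.transport htrans v (ρ.act c v), fun c hc => ?_, fun φ hφ => ?_,
    fun c hc c' hc' => ?_, fun c hc c' hc' => ?_⟩ <;> dsimp only
  · obtain ⟨hc₁, hc₂, hstab⟩ := ρ.mem_normalizerAt_stab_iff.1 hc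
    refine ⟨ρ.isActionAut_transport htrans hstab, fun a ha => ?_⟩
    rw [ρ.transport_act htrans hstab ha, ρ.act_comp _ _ _ hc₁ (ha.trans hc₂.symm)]
  · obtain ⟨c, hc₁, hcv⟩ := htrans (φ v) v
    have hc₂ : G.rng c = ρ.fib v := by rw [← ρ.act_fib _ _ hc₁, hcv, hφ.2.1]
    refine ⟨c, ρ.mem_normalizerAt_stab_iff.2 ⟨hc₁, hc₂, ?_⟩, ?_⟩ <;> rw [hcv]
    · exact ρ.stab_apply_of_isActionAut hφ v
    · exact ρ.transport_apply_self htrans hφ.2 v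
  · obtain ⟨hc₁, hc₂, hstab⟩ := ρ.mem_normalizerAt_stab_iff.1 hc
    obtain ⟨hc₁', -, hstab'⟩ := ρ.mem_normalizerAt_stab_iff.1 hc'
    rw [ρ.transport_comp_transport htrans hstab (ρ.fib_eq_of_stab_eq hstab'),
      ρ.transport_act htrans hstab hc₁', ρ.act_comp _ _ _ hc₁ (hc₁'.trans hc₂.symm)]
  · obtain ⟨hc₁, hc₂, hstab⟩ := ρ.mem_normalizerAt_stab_iff.1 hc
    obtain ⟨hc₁', hc₂', hstab'⟩ := ρ.mem_normalizerAt_stab_iff.1 hc'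
    rw [ρ.transport_inj htrans hstab hstab', eq_comm, ρ.act_eq_act_iff hc₁' hc₁, hc₂, hc₂',
      and_iff_right rfl]

/-- For a transitive action of a groupoid `𝒢` on `V`, an
object `x` and `v ∈ V_x`, the automorphism group `Aut(V,𝒢)` is isomorphic to
`N(S_v)/S_v`: each `c` in the normalizer `N(S_v)` of `S_v` in `x𝒢x`
determines a well-defined automorphism `av ↦ acv` (`a ∈ 𝒢x`), this
assignment is surjective onto `Aut(V,𝒢)`, multiplicative (as a right
action, `Θ c ∘ Θ c' = Θ (c'c)`), and identifies `c, c'` exactly when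
`c⁻¹c' ∈ S_v`. -/
theorem aut_action_iso_normalizer_quotient {B V : Type}
    (G : GroupoidStruct B) (ρ : GpdActionStruct G V)
    (htrans : ρ.Transitive) (x : B) (hx : G.IsVertex x)
    (v : V) (hv : ρ.fib v = x) :
    ∃ Θ : B → (V → V),
      (∀ c ∈ G.normalizerAt x (ρ.stab v),
        IsActionAut ρ (Θ c) ∧
        ∀ a, G.src a = x → Θ c (ρ.act a v) = ρ.act (G.comp a c) v) ∧
      (∀ φ, IsActionAut ρ φ → ∃ c ∈ G.normalizerAt x (ρ.stab v), Θ c = φ) ∧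
      (∀ c ∈ G.normalizerAt x (ρ.stab v), ∀ c' ∈ G.normalizerAt x (ρ.stab v),
        Θ c ∘ Θ c' = Θ (G.comp c' c)) ∧
      (∀ c ∈ G.normalizerAt x (ρ.stab v), ∀ c' ∈ G.normalizerAt x (ρ.stab v),
        (Θ c = Θ c' ↔ G.comp (G.inv c) c' ∈ ρ.stab v)) :=
  aut_action_iso_normalizer_quotient_general G ρ htrans x v hv

end KGraphCovering
end

section
/- (Gross–Tucker Theorem for k-graphs) Let G be a group acting freely by k-graph automorphisms on a k-graph Σ (free meaning that only the identity element of G fixes any vertex). Then there exists a cocycle η : Σ/G → G such that the quotient covering Σ → Σ/G is isomorphic, as a covering of Σ/G, to the skew-product covering (Σ/G) ×_η G → Σ/G; that is, there is a k-graph isomorphism φ : Σ → (Σ/G) ×_η G whose composition with the coordinate projection equals the quotient map. -/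
namespace KGraphCovering

/-- **Gross–Tucker Theorem for `k`-graphs.** If a group `G`
acts freely by `k`-graph automorphisms on a `k`-graph `Σ` (only the identity
fixes a vertex), then there is a cocycle `η : Σ/G → G` such that the quotient
covering `Σ → Σ/G` is isomorphic, as a covering of `Σ/G`, to the skew-product
covering `(Σ/G) ×_η G → Σ/G`.  The quotient `Σ/G` is given abstractly as a
`k`-graph `Q` with a surjective morphism `π` whose fibers are the `G`-orbits;
the isomorphism `φ : Σ → Q ×_η G` is `λ ↦ (π λ, c λ)` for a map `c : Σ → G`,
and the listed conditions on `(η, c)` say exactly that this bijection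
transports the structure of `Σ` to the skew-product `k`-graph structure
(`s(α,g) = (s α, g)`, `r(α,g) = (r α, η(α)g)`, `(α, η(β)g)(β,g) = (αβ, g)`,
`d(α,g) = d(α)`) and commutes with the projections onto `Σ/G`. -/
theorem gross_tucker {k : ℕ} {A Qc : Type}
    (Sg : KGraphStruct k A) (G : Type) [Group G]
    (act : A → G → A)
    (act_one : ∀ a, act a 1 = a)
    (act_mul : ∀ a g h, act (act a g) h = act a (g * h))
    (act_src : ∀ a g, Sg.src (act a g) = act (Sg.src a) g)
    (act_rng : ∀ a g, Sg.rng (act a g) = act (Sg.rng a) g)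
    (act_comp : ∀ a b g, Sg.src a = Sg.rng b →
      act (Sg.comp a b) g = Sg.comp (act a g) (act b g))
    (act_deg : ∀ a g, Sg.deg (act a g) = Sg.deg a)
    (hfree : ∀ v g, Sg.IsVertex v → act v g = v → g = 1)
    (Q : KGraphStruct k Qc) (π : A → Qc)
    (hπ : IsKGraphHomFun Sg Q π) (hπs : Function.Surjective π)
    (hπfib : ∀ a b, π a = π b ↔ ∃ g, act a g = b) :
    ∃ (η : Qc → G) (c : A → G),
      -- `η` is a cocycle on `Σ/G`
      (∀ q q', Q.src q = Q.rng q' → η (Q.comp q q') = η q * η q') ∧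
      (∀ q, Q.IsVertex q → η q = 1) ∧
      -- `λ ↦ (π λ, c λ)` is an isomorphism onto the skew product `Q ×_η G`
      Function.Bijective (fun a : A => (π a, c a)) ∧
      (∀ a, c (Sg.src a) = c a) ∧
      (∀ a, c (Sg.rng a) = η (π a) * c a) ∧
      (∀ a b, Sg.src a = Sg.rng b → c (Sg.comp a b) = c b) := by
  classical
  obtain ⟨hπsrc, hπrng, hπcomp, hπdeg⟩ := hπ
  -- a set-theoretic section of π
  let L : Qc → A := fun q => Classical.choose (hπs q)
  have hL : ∀ q, π (L q) = q := fun q => Classical.choose_spec (hπs q)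
  -- basepoint vertices
  let V : Qc → A := fun q => Sg.src (L q)
  have hVv : ∀ q, Sg.IsVertex (V q) := fun q => Sg.src_src _
  have hVπ : ∀ q, π (V q) = Q.src q := fun q => by
    show π (Sg.src (L q)) = Q.src q
    rw [hπsrc, hL]
  have horb : ∀ (x : A) (g : G), π (act x g) = π x := fun x g =>
    (hπfib _ _).mpr ⟨g⁻¹, by rw [act_mul, mul_inv_cancel, act_one]⟩
  have hidx : ∀ a, π (V (π (Sg.src a))) = π (Sg.src a) := fun a => by
    rw [hVπ, hπsrc, Q.src_src, ← hπsrc]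
  have hex : ∀ a, ∃ g, act (V (π (Sg.src a))) g = Sg.src a := fun a =>
    (hπfib _ _).mp (hidx a)
  let c : A → G := fun a => Classical.choose (hex a)
  have hc : ∀ a, act (V (π (Sg.src a))) (c a) = Sg.src a := fun a =>
    Classical.choose_spec (hex a)
  -- freeness gives uniqueness
  have huniq : ∀ q (g g' : G), act (V q) g = act (V q) g' → g = g' := by
    intro q g g' h
    have h2 : act (V q) (g * g'⁻¹) = act (V q) (g' * g'⁻¹) := by
      rw [← act_mul, ← act_mul, h]
    rw [mul_inv_cancel, act_one] at h2
    have h3 := hfree _ _ (hVv q) h2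
    have : g * g'⁻¹ * g' = 1 * g' := by rw [h3]
    simpa using this
  have cchar : ∀ a g, act (V (π (Sg.src a))) g = Sg.src a → c a = g :=
    fun a g h => huniq _ _ _ ((hc a).trans h.symm)
  have csrcEq : ∀ a b, Sg.src a = Sg.src b → c a = c b := fun a b h =>
    cchar a (c b) (by rw [h]; exact hc b)
  have cact : ∀ a g, c (act a g) = c a * g := by
    intro a g
    apply huniq (π (Sg.src (act a g)))
    rw [hc]
    have h2 : π (Sg.src (act a g)) = π (Sg.src a) := by rw [act_src, horb]
    rw [h2, ← act_mul, hc, ← act_src]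
  let η : Qc → G := fun q => c (Sg.rng (L q)) * (c (L q))⁻¹
  have ηchar : ∀ a, η (π a) = c (Sg.rng a) * (c a)⁻¹ := by
    intro a
    obtain ⟨g, hg⟩ := (hπfib (L (π a)) a).mp (hL (π a))
    have h1 : c a = c (L (π a)) * g := by
      have := cact (L (π a)) g; rwa [hg] at this
    have h2 : c (Sg.rng a) = c (Sg.rng (L (π a))) * g := by
      have := cact (Sg.rng (L (π a))) g
      rwa [← act_rng, hg] at this
    show c (Sg.rng (L (π a))) * (c (L (π a)))⁻¹ = c (Sg.rng a) * (c a)⁻¹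
    rw [h1, h2]
    group
  refine ⟨η, c, ?_, ?_, ?_, ?_, ?_, ?_⟩
  · -- cocycle identity
    intro q q' hqq'
    obtain ⟨g, hg⟩ : ∃ g, act (Sg.src (L q)) g = Sg.rng (L q') := by
      apply (hπfib _ _).mp
      rw [hπsrc, hπrng, hL, hL, hqq']
    set a' := act (L q) g with ha'
    have hsrca' : Sg.src a' = Sg.rng (L q') := by rw [ha', act_src, hg]
    have hπa' : π a' = q := by rw [ha', horb, hL]
    have hcompπ : π (Sg.comp a' (L q')) = Q.comp q q' := by
      rw [hπcomp _ _ hsrca', hπa', hL]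
    have hca' : c a' = c (Sg.rng (L q')) := by
      apply csrcEq
      rw [hsrca', Sg.src_rng]
    have e1 := ηchar (Sg.comp a' (L q'))
    rw [hcompπ, Sg.rng_comp _ _ hsrca',
      csrcEq (Sg.comp a' (L q')) (L q') (Sg.src_comp _ _ hsrca')] at e1
    have e2 := ηchar a'
    rw [hπa'] at e2
    have e3 := ηchar (L q')
    rw [hL q'] at e3
    rw [e1, e2, e3, hca']
    group
  · -- vertices map to 1
    intro q hq
    have hπw : π (Sg.src (L q)) = q := by rw [hπsrc, hL, hq]
    have hch := ηchar (Sg.src (L q))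
    rw [hπw] at hch
    rw [hch, Sg.rng_src, mul_inv_cancel]
  · -- bijectivity
    constructor
    · intro a b h
      simp only [Prod.mk.injEq] at h
      obtain ⟨g, hg⟩ := (hπfib a b).mp h.1
      have hcb : c b = c a * g := by
        have := cact a g; rwa [hg] at this
      rw [h.2] at hcb
      have hg1 : g = 1 := left_eq_mul.mp hcb
      rw [← hg, hg1, act_one]
    · rintro ⟨q, g⟩
      refine ⟨act (L q) ((c (L q))⁻¹ * g), ?_⟩
      simp only [Prod.mk.injEq]
      constructor
      · rw [horb, hL]
      · rw [cact, ← mul_assoc, mul_inv_cancel, one_mul]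
  · intro a
    exact csrcEq _ _ (Sg.src_src a)
  · intro a
    rw [ηchar]
    group
  · intro a b h
    exact csrcEq _ _ (Sg.src_comp _ _ h)

end KGraphCovering
end
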